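/- arXiv:2303.16048 — 3 statements merged into one kernel-verified Lean document; each statement's English description precedes it below -/
import Mathlib

section
/- Total cost correspondence for straight-line programs: for any finite sequence of queue operations (each either an enqueue of an element or a dequeue), the total cost of executing the sequence on the batched queue starting from state (bl, fl) plus the final potential Φ of the resulting state equals the total cost of executing the same sequence on the single-list specification queue starting from fl ++ reverse bl plus the initial potential Φ(bl, fl). -/
/-- A single queue operation: enqueue an element, or dequeue. -/
inductive Op (E : Type) : Type
  | enq : E → Op E
  | deq : Op E

/-- One step of the single-list specification queue: new state. -/
def specStep {E : Type} (l : List E) : Op E → List E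
  | .enq e => l ++ [e]
  | .deq => l.tail

/-- One step of the single-list specification queue: cost (enqueue costs 1, dequeue 0). -/
def specOpCost {E : Type} (_ : List E) : Op E → ℕ
  | .enq _ => 1
  | .deq => 0

/-- Total cost of running a sequence of operations on the single-list queue. -/
def specCost {E : Type} : List (Op E) → List E → ℕ
  | [], _ => 0
  | o :: ops, l => specOpCost l o + specCost ops (specStep l o)

/-- One step of the batched queue (state `(bl, fl)`): new state. -/
def batchedStep {E : Type} (s : List E × List E) : Op E → List E × List E
  | .enq e => (e :: s.1, s.2)
  | .deq =>
    match s.2 with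
    | e :: fl => (s.1, fl)
    | [] => ([], s.1.reverse.tail)

/-- One step of the batched queue: cost (enqueue costs 0; dequeue costs 0 unless
the front list is empty, in which case it costs `length bl` for the reversal). -/
def batchedOpCost {E : Type} (s : List E × List E) : Op E → ℕ
  | .enq _ => 0
  | .deq =>
    match s.2 with
    | _ :: _ => 0
    | [] => s.1.length

/-- Running a sequence of operations on the batched queue: final state. -/
def batchedRun {E : Type} : List (Op E) → List E × List E → List E × List E
  | [], s => s
  | o :: ops, s => batchedRun ops (batchedStep s o)

/-- Total cost of running a sequence of operations on the batched queue. -/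
def batchedCost {E : Type} : List (Op E) → List E × List E → ℕ
  | [], _ => 0
  | o :: ops, s => batchedOpCost s o + batchedCost ops (batchedStep s o)

/-- The potential of a batched queue state. -/
def Φ {E : Type} (s : List E × List E) : ℕ := s.1.length

theorem batched_spec_cost_correspondence {E : Type} (ops : List (Op E)) (bl fl : List E) :
    batchedCost ops (bl, fl) + Φ (batchedRun ops (bl, fl)) =
      specCost ops (fl ++ bl.reverse) + Φ (bl, fl) := by
  induction ops generalizing bl fl with
  | nil => simp [batchedCost, batchedRun, specCost]
  | cons o ops ih =>
    cases o with
    | enq e =>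
      simp only [batchedCost, batchedRun, batchedStep, specCost, specStep, specOpCost,
        batchedOpCost]
      have h := ih (e :: bl) fl
      simp [Φ, List.append_assoc] at h ⊢
      omega
    | deq =>
      cases fl with
      | cons x fl' =>
        simp only [batchedCost, batchedRun, batchedStep, specCost, specStep, specOpCost,
          batchedOpCost]
        have h := ih bl fl'
        simp [Φ] at h ⊢
        omega
      | nil =>
        simp only [batchedCost, batchedRun, batchedStep, specCost, specStep, specOpCost,
          batchedOpCost]
        have h := ih [] bl.reverse.tail
        simp [Φ] at h ⊢
        omega
end

section
/- Amortized equivalence is an equivalence relation: the relation ≈ on coinductive queues (quit costs are equal; enqueues of equal elements remain ≈; dequeues return equal optional elements, with the respective costs pushed onto the successor queues via step, and the stepped successors remain ≈) is reflexive, symmetric, and transitive. -/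
/-- The polynomial functor whose final coalgebra is the coinductive queue
interface: `quit : ℕ`, `enqueue : E → Queue`, `dequeue : ℕ × (Option E × Queue)`.
A node carries `(quit cost, dequeue cost, dequeued element)` and has children
indexed by `Option E`: `some e` is the queue after enqueuing `e`, `none` is the
successor queue after dequeuing. -/
def QueueF (E : Type) : PFunctor := ⟨ℕ × ℕ × Option E, fun _ => Option E⟩

/-- The coinductive queue interface: the final coalgebra of `QueueF`. -/
def Queue (E : Type) : Type := (QueueF E).M

namespace Queue

variable {E : Type}

/-- The final cost. -/
def quit (q : Queue E) : ℕ := (PFunctor.M.dest q).1.1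

/-- The cost of the next dequeue. -/
def deqCost (q : Queue E) : ℕ := (PFunctor.M.dest q).1.2.1

/-- The optional element returned by the next dequeue. -/
def deqElem (q : Queue E) : Option E := (PFunctor.M.dest q).1.2.2

/-- The queue after enqueuing an element. -/
def enqueue (q : Queue E) (e : E) : Queue E := (PFunctor.M.dest q).2 (some e)

/-- The successor queue after dequeuing. -/
def deqNext (q : Queue E) : Queue E := (PFunctor.M.dest q).2 none

/-- The dequeue method: a cost paired with an optional element and successor queue. -/
def dequeue (q : Queue E) : ℕ × (Option E × Queue E) := (deqCost q, deqElem q, deqNext q)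

/-- `step c q` adds cost `c` to the `quit` cost and to the cost of the first
`dequeue`, and propagates `step c` through `enqueue`. -/
def step (c : ℕ) (q : Queue E) : Queue E :=
  PFunctor.M.corec
    (fun s : ℕ × Queue E =>
      ⟨(s.1 + quit s.2, s.1 + deqCost s.2, deqElem s.2),
       fun o =>
         match o with
         | some e => (s.1, enqueue s.2 e)
         | none => (0, deqNext s.2)⟩)
    (c, q)

/-- A relation is a bisimulation if related queues have equal observations and
related successors. -/
def IsBisim (R : Queue E → Queue E → Prop) : Prop :=
  ∀ q₁ q₂, R q₁ q₂ →
    quit q₁ = quit q₂ ∧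
    (∀ e, R (enqueue q₁ e) (enqueue q₂ e)) ∧
    deqCost q₁ = deqCost q₂ ∧
    deqElem q₁ = deqElem q₂ ∧
    R (deqNext q₁) (deqNext q₂)

/-- Bisimilarity: the largest bisimulation. -/
def Bisim (q₁ q₂ : Queue E) : Prop := ∃ R, IsBisim R ∧ R q₁ q₂

/-- A relation is an amortized bisimulation if related queues have equal quit
costs, related enqueues, equal dequeued elements, and successors related after
pushing the respective dequeue costs onto them via `step`. -/
def IsAmortizedBisim (R : Queue E → Queue E → Prop) : Prop :=
  ∀ q₁ q₂, R q₁ q₂ →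
    quit q₁ = quit q₂ ∧
    (∀ e, R (enqueue q₁ e) (enqueue q₂ e)) ∧
    deqElem q₁ = deqElem q₂ ∧
    R (step (deqCost q₁) (deqNext q₁)) (step (deqCost q₂) (deqNext q₂))

/-- Amortized equivalence `≈`: the largest amortized bisimulation. -/
def AmortEquiv (q₁ q₂ : Queue E) : Prop := ∃ R, IsAmortizedBisim R ∧ R q₁ q₂

/-- The single-list specification queue, with a pending cost `c` already
`step`ped onto it.  `quit (QUEUEaux (c, l)) = c`; enqueue costs `1` (added to
the pending cost) and appends to the end; dequeue costs the pending cost and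
removes the head. -/
def QUEUEaux : ℕ × List E → Queue E :=
  PFunctor.M.corec fun s =>
    match s with
    | (c, []) =>
      ⟨(c, c, none), fun o =>
        match o with
        | some e => (c + 1, [e])
        | none => (0, [])⟩
    | (c, e :: l) =>
      ⟨(c, c, some e), fun o =>
        match o with
        | some e' => (c + 1, e :: (l ++ [e']))
        | none => (0, l)⟩

/-- The single-list specification queue: `quit` costs 0, `enqueue e` is
`step 1` of the queue on `l ++ [e]`, `dequeue` costs 0 and removes the head. -/
def QUEUE (l : List E) : Queue E := QUEUEaux (0, l)

/-- The batched queue on state `(bl, fl)`: `quit` pays the potential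
`length bl`; `enqueue` conses onto `bl` for free; `dequeue` pops the head of
`fl` for free, or, if `fl` is empty, reverses `bl` at cost `length bl`. -/
def batchedQueue : List E × List E → Queue E :=
  PFunctor.M.corec fun s =>
    match s with
    | (bl, e :: fl) =>
      ⟨(bl.length, 0, some e), fun o =>
        match o with
        | some e' => (e' :: bl, e :: fl)
        | none => (bl, fl)⟩
    | (bl, []) =>
      match bl.reverse with
      | [] =>
        ⟨(bl.length, 0, none), fun o =>
          match o with
          | some e' => (e' :: bl, [])
          | none => ([], [])⟩
      | e :: fl' =>
        ⟨(bl.length, bl.length, some e), fun o =>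
          match o with
          | some e' => (e' :: bl, [])
          | none => ([], fl')⟩

end Queue

/-- Finite queue programs: return, enqueue an element and continue, or dequeue
and continue with a cost and program depending on the dequeued element. -/
inductive Program (E : Type) : Type
  | ret : Program E
  | enq : E → Program E → Program E
  | deq : (Option E → ℕ) → (Option E → Program E) → Program E

namespace Queue

/-- Evaluation of a program on a queue, summing all incurred costs including
the final `quit` cost. -/
def psi {E : Type} : Program E → Queue E → ℕ
  | .ret, q => quit q
  | .enq e p, q => psi p (enqueue q e)
  | .deq c f, q =>
    deqCost q + c (deqElem q) + psi (f (deqElem q)) (deqNext q)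

end Queue


lemma isAmortizedBisim_amortEquiv {E : Type} :
    Queue.IsAmortizedBisim (Queue.AmortEquiv (E := E)) := by
  intro q₁ q₂ ⟨R, hR, hq⟩
  obtain ⟨h1, h2, h3, h4⟩ := hR q₁ q₂ hq
  exact ⟨h1, fun e => ⟨R, hR, h2 e⟩, h3, ⟨R, hR, h4⟩⟩

theorem amortEquiv_equivalence {E : Type} :
    Equivalence (Queue.AmortEquiv (E := E)) := by
  constructor
  · intro q
    exact ⟨Eq, fun a b h => by subst h; exact ⟨rfl, fun _ => rfl, rfl, rfl⟩, rfl⟩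
  · rintro a b ⟨R, hR, hab⟩
    refine ⟨fun x y => R y x, ?_, hab⟩
    intro x y h
    obtain ⟨h1, h2, h3, h4⟩ := hR y x h
    exact ⟨h1.symm, h2, h3.symm, h4⟩
  · rintro a b c hab hbc
    refine ⟨fun x z => ∃ y, Queue.AmortEquiv x y ∧ Queue.AmortEquiv y z, ?_, b, hab, hbc⟩
    rintro x z ⟨y, hxy, hyz⟩
    obtain ⟨h1, h2, h3, h4⟩ := isAmortizedBisim_amortEquiv x y hxy
    obtain ⟨g1, g2, g3, g4⟩ := isAmortizedBisim_amortEquiv y z hyz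
    exact ⟨h1.trans g1, fun e => ⟨_, h2 e, g2 e⟩, h3.trans g3,
      ⟨_, h4, g4⟩⟩
end

section
/- Congruence of step with amortized equivalence: for every cost c and queues q₁ ≈ q₂, we have step c q₁ ≈ step c q₂. -/
/-! Since `step a ∘ step b = step (a + b)`, the successor of `step c q` with its dequeue cost
pushed on is `step c` of the successor of `q` with its own cost pushed on; the other
observations of `step c q` are those of `q` shifted by `c`. Hence the image of an amortized
bisimulation under `step c` (on both sides) is again an amortized bisimulation. -/

namespace Queue

variable {E : Type}

theorem IsBisim.eq {R : Queue E → Queue E → Prop} (hR : IsBisim R) {q₁ q₂ : Queue E}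
    (h : R q₁ q₂) : q₁ = q₂ := by
  refine PFunctor.M.bisim R (fun x y hxy => ?_) q₁ q₂ h
  obtain ⟨hquit, henq, hcost, helem, hnext⟩ := hR x y hxy
  have hhead : (PFunctor.M.dest x).1 = (PFunctor.M.dest y).1 :=
    Prod.ext hquit (Prod.ext hcost helem)
  refine ⟨_, (PFunctor.M.dest x).2, (PFunctor.M.dest y).2, rfl, ?_, ?_⟩
  · rw [hhead]; rfl
  · rintro (_ | e)
    exacts [hnext, henq e]

theorem quit_step (c : ℕ) (q : Queue E) : quit (step c q) = c + quit q :=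
  (congrArg (fun x : (QueueF E).Obj (Queue E) => x.1.1) (PFunctor.M.dest_corec _ (c, q)) :)

theorem deqCost_step (c : ℕ) (q : Queue E) : deqCost (step c q) = c + deqCost q :=
  (congrArg (fun x : (QueueF E).Obj (Queue E) => x.1.2.1) (PFunctor.M.dest_corec _ (c, q)) :)

theorem deqElem_step (c : ℕ) (q : Queue E) : deqElem (step c q) = deqElem q :=
  (congrArg (fun x : (QueueF E).Obj (Queue E) => x.1.2.2) (PFunctor.M.dest_corec _ (c, q)) :)

theorem enqueue_step (c : ℕ) (q : Queue E) (e : E) :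
    enqueue (step c q) e = step c (enqueue q e) :=
  (congrArg (fun x : (QueueF E).Obj (Queue E) => x.2 (some e)) (PFunctor.M.dest_corec _ (c, q)) :)

theorem deqNext_step (c : ℕ) (q : Queue E) : deqNext (step c q) = step 0 (deqNext q) :=
  (congrArg (fun x : (QueueF E).Obj (Queue E) => x.2 none) (PFunctor.M.dest_corec _ (c, q)) :)

theorem step_step (a b : ℕ) (q : Queue E) : step a (step b q) = step (a + b) q := by
  let R : Queue E → Queue E → Prop :=
    fun x y => ∃ a b q, x = step a (step b q) ∧ y = step (a + b) q
  refine IsBisim.eq (R := R) ?_ ⟨a, b, q, rfl, rfl⟩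
  rintro _ _ ⟨a, b, q, rfl, rfl⟩
  simp only [quit_step, deqCost_step, deqElem_step, enqueue_step, deqNext_step, add_assoc]
  exact ⟨trivial, fun e => ⟨a, b, enqueue q e, rfl, rfl⟩, trivial, trivial,
    ⟨0, 0, deqNext q, rfl, rfl⟩⟩

theorem step_deqCost_deqNext_step (c : ℕ) (q : Queue E) :
    step (deqCost (step c q)) (deqNext (step c q)) = step c (step (deqCost q) (deqNext q)) := by
  rw [deqCost_step, deqNext_step, step_step, step_step, add_zero]

theorem IsAmortizedBisim.image_step {R : Queue E → Queue E → Prop} (hR : IsAmortizedBisim R) :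
    IsAmortizedBisim fun x y => ∃ c q₁ q₂, R q₁ q₂ ∧ x = step c q₁ ∧ y = step c q₂ := by
  rintro _ _ ⟨c, q₁, q₂, h, rfl, rfl⟩
  obtain ⟨hquit, henq, helem, hnext⟩ := hR q₁ q₂ h
  refine ⟨?_, fun e => ⟨c, _, _, henq e, enqueue_step .., enqueue_step ..⟩, ?_,
    ⟨c, _, _, hnext, step_deqCost_deqNext_step .., step_deqCost_deqNext_step ..⟩⟩
  · rw [quit_step, quit_step, hquit]
  · rw [deqElem_step, deqElem_step, helem]

end Queue

theorem step_congr_amortEquiv {E : Type} (c : ℕ) (q₁ q₂ : Queue E)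
    (h : Queue.AmortEquiv q₁ q₂) :
    Queue.AmortEquiv (Queue.step c q₁) (Queue.step c q₂) := by
  obtain ⟨R, hR, hq⟩ := h
  exact ⟨_, hR.image_step, c, q₁, q₂, hq, rfl, rfl⟩
end
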